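/- arXiv:2511.17878 — 4 statements merged into one kernel-verified Lean document; each statement's English description precedes it below -/
import Mathlib

section
/- E[‖Y_ISI‖_F²] = (M−1)·Σ_{q=Q̃+1}^{Q} (l_q − N_cp)·P_q, where ‖·‖_F denotes the Frobenius norm. -/
open MeasureTheory ProbabilityTheory Complex Finset Matrix
open scoped ComplexConjugate Real

/-!
Entrywise, `Y_ISI` is a linear combination of the products `α_q s_{k,j}` with coefficients
`Φ_q[n,k] b_k conj(c_j) J₁[j,m]`. Independence and zero means make these products orthogonal in
`L²` with `E|α_q s_{k,j}|² = P_q`, so the expected squared Frobenius norm is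
`∑_q P_q ∑ |coefficient|²`. The phase factors `b_k conj(c_j)` have modulus one, so the coefficient
sum factors as `‖Φ_q‖_F² ‖J₁‖_F²`. The shift `J₁` has `M - 1` unit entries, and `Φ_q` is the
orthogonal projection onto `l_q - N_cp` DFT vectors, whose squared Frobenius norm is its rank.
-/

section L2Orthogonal

variable {Ω ι κ : Type*} {mΩ : MeasurableSpace Ω} {μ : Measure Ω}

structure IsL2Orthogonal [DecidableEq ι] (X : ι → Ω → ℂ) (v : ι → ℝ) (μ : Measure Ω) : Prop where
  integrable_mul_conj : ∀ i j, Integrable (fun ω => X i ω * conj (X j ω)) μ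
  integral_mul_conj : ∀ i j, ∫ ω, X i ω * conj (X j ω) ∂μ = if i = j then (v i : ℂ) else 0

lemma ProbabilityTheory.iIndepFun.isL2Orthogonal [DecidableEq ι] {Z : ι → Ω → ℂ} {v : ι → ℝ}
    (hZ : iIndepFun Z μ) (hL2 : ∀ i, MemLp (Z i) 2 μ) (hmean : ∀ i, ∫ ω, Z i ω ∂μ = 0)
    (hv : ∀ i, ∫ ω, ‖Z i ω‖ ^ 2 ∂μ = v i) :
    IsL2Orthogonal Z v μ where
  integrable_mul_conj i j := (hL2 i).integrable_mul (hL2 j).star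
  integral_mul_conj i j := by
    split_ifs with hij
    · subst hij
      simp_rw [mul_conj', ← ofReal_pow, integral_complex_ofReal, hv]
    · have hind : IndepFun (Z i) (fun ω => conj (Z j ω)) μ :=
        (hZ.indepFun hij).comp measurable_id continuous_conj.measurable
      rw [hind.integral_fun_mul_eq_mul_integral (hL2 i).1 (hL2 j).1.star, hmean i, zero_mul]

lemma IsL2Orthogonal.mul [DecidableEq ι] [DecidableEq κ] {X : ι → Ω → ℂ} {Y : κ → Ω → ℂ}
    {v : ι → ℝ} {w : κ → ℝ}
    (hX : IsL2Orthogonal X v μ) (hY : IsL2Orthogonal Y w μ)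
    (hXY : ∀ i i' j j', IndepFun (fun ω => (X i ω, X i' ω)) (fun ω => (Y j ω, Y j' ω)) μ) :
    IsL2Orthogonal (fun (p : ι × κ) ω => X p.1 ω * Y p.2 ω) (fun p => v p.1 * w p.2) μ := by
  have hsplit : ∀ (p p' : ι × κ) ω, X p.1 ω * Y p.2 ω * conj (X p'.1 ω * Y p'.2 ω) =
      X p.1 ω * conj (X p'.1 ω) * (Y p.2 ω * conj (Y p'.2 ω)) := by
    intro p p' ω; rw [map_mul]; ring
  have hind : ∀ p p' : ι × κ, IndepFun (fun ω => X p.1 ω * conj (X p'.1 ω))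
      (fun ω => Y p.2 ω * conj (Y p'.2 ω)) μ := fun p p' =>
    (hXY p.1 p'.1 p.2 p'.2).comp (φ := fun z : ℂ × ℂ => z.1 * conj z.2)
      (ψ := fun z : ℂ × ℂ => z.1 * conj z.2) (by fun_prop) (by fun_prop)
  refine ⟨fun p p' => ?_, fun p p' => ?_⟩
  · simp_rw [hsplit]
    exact (hind p p').integrable_mul (hX.integrable_mul_conj _ _) (hY.integrable_mul_conj _ _)
  · simp_rw [hsplit]
    rw [(hind p p').integral_fun_mul_eq_mul_integral (hX.integrable_mul_conj _ _).1
      (hY.integrable_mul_conj _ _).1, hX.integral_mul_conj, hY.integral_mul_conj]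
    obtain ⟨i, j⟩ := p
    obtain ⟨i', j'⟩ := p'
    by_cases hi : i = i' <;> by_cases hj : j = j' <;> simp [hi, hj]

lemma ProbabilityTheory.iIndepFun.isL2Orthogonal_mul [DecidableEq ι] [DecidableEq κ]
    {X : ι → Ω → ℂ} {Y : κ → Ω → ℂ} {v : ι → ℝ} {w : κ → ℝ} (h : iIndepFun (Sum.elim X Y) μ)
    (hX : ∀ i, MemLp (X i) 2 μ) (hY : ∀ j, MemLp (Y j) 2 μ)
    (hX0 : ∀ i, ∫ ω, X i ω ∂μ = 0) (hY0 : ∀ j, ∫ ω, Y j ω ∂μ = 0)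
    (hv : ∀ i, ∫ ω, ‖X i ω‖ ^ 2 ∂μ = v i) (hw : ∀ j, ∫ ω, ‖Y j ω‖ ^ 2 ∂μ = w j) :
    IsL2Orthogonal (fun (p : ι × κ) ω => X p.1 ω * Y p.2 ω) (fun p => v p.1 * w p.2) μ := by
  have hXind : iIndepFun X μ := iIndepFun.precomp (g := Sum.inl) Sum.inl_injective h
  have hYind : iIndepFun Y μ := iIndepFun.precomp (g := Sum.inr) Sum.inr_injective h
  have hmeas : ∀ i, AEMeasurable (Sum.elim X Y i) μ := by
    rintro (i | j)
    exacts [(hX i).1.aemeasurable, (hY j).1.aemeasurable]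
  refine (hXind.isL2Orthogonal hX hX0 hv).mul (hYind.isL2Orthogonal hY hY0 hw)
    fun i i' j j' => ?_
  exact h.indepFun_prodMk_prodMk₀ hmeas (.inl i) (.inl i') (.inr j) (.inr j')
    (by simp) (by simp) (by simp) (by simp)

lemma IsL2Orthogonal.integral_sum_norm_sq_sum [DecidableEq ι] [Fintype κ] {X : ι → Ω → ℂ}
    {v : ι → ℝ}
    (hX : IsL2Orthogonal X v μ) (s : Finset ι) (C : κ → ι → ℂ) :
    ∫ ω, ∑ k, ‖∑ i ∈ s, C k i * X i ω‖ ^ 2 ∂μ = ∑ k, ∑ i ∈ s, ‖C k i‖ ^ 2 * v i := by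
  have hexpand : ∀ ω, ((∑ k, ‖∑ i ∈ s, C k i * X i ω‖ ^ 2 : ℝ) : ℂ) =
      ∑ k, ∑ i ∈ s, ∑ j ∈ s, C k i * conj (C k j) * (X i ω * conj (X j ω)) := by
    intro ω
    push_cast
    refine Finset.sum_congr rfl fun k _ => ?_
    rw [← mul_conj', map_sum, Finset.sum_mul_sum]
    refine Finset.sum_congr rfl fun i _ => Finset.sum_congr rfl fun j _ => ?_
    rw [map_mul]; ring
  apply ofReal_injective
  rw [← integral_complex_ofReal]
  simp_rw [hexpand]
  rw [integral_finsetSum _ fun k _ => integrable_finsetSum _ fun i _ =>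
    integrable_finsetSum _ fun j _ => (hX.integrable_mul_conj i j).const_mul _]
  push_cast
  refine Finset.sum_congr rfl fun k _ => ?_
  rw [integral_finsetSum _ fun i _ => integrable_finsetSum _ fun j _ =>
    (hX.integrable_mul_conj i j).const_mul _]
  refine Finset.sum_congr rfl fun i hi => ?_
  rw [integral_finsetSum _ fun j _ => (hX.integrable_mul_conj i j).const_mul _]
  simp_rw [integral_const_mul, hX.integral_mul_conj, mul_ite, mul_zero]
  rw [Finset.sum_ite_eq s i, if_pos hi, mul_conj']

end L2Orthogonal

lemma sum_exp_two_pi_I_mul_sub_div_eq_ite {N i i' : ℕ} (hi : i < N) (hi' : i' < N) :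
    ∑ n : Fin N, exp (2 * π * I * (n : ℕ) * ((i : ℂ) - i') / N) =
      if i = i' then (N : ℂ) else 0 := by
  have hN : N ≠ 0 := by omega
  have hζ := isPrimitiveRoot_exp N hN
  set z := exp (2 * π * I / N) ^ ((i : ℤ) - i') with hz
  have hterm : ∀ n : ℕ, exp (2 * π * I * n * ((i : ℂ) - i') / N) = z ^ n := by
    intro n
    rw [hz, ← zpow_natCast, ← _root_.zpow_mul, ← exp_int_mul]
    congr 1
    push_cast
    ring
  simp_rw [hterm, Fin.sum_univ_eq_sum_range (z ^ ·) N]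
  split_ifs with h
  · simp [hz, h]
  · have hz1 : z ≠ 1 := by
      rw [hz, Ne, hζ.zpow_eq_one_iff_dvd]
      intro hdvd
      have := Int.eq_zero_of_abs_lt_dvd hdvd (by rw [abs_lt]; omega)
      omega
    have hzN : z ^ N = 1 := by
      rw [hz, ← zpow_natCast, ← _root_.zpow_mul, mul_comm ((i : ℤ) - i'), _root_.zpow_mul,
        zpow_natCast, hζ.pow_eq_one, _root_.one_zpow]
    rw [geom_sum_eq hz1, hzN, sub_self, zero_div]

/-- `(1/N) ∑_{i<L} vᵢ vᵢᴴ` with `vᵢ n = exp(-2πi n i / N)`: the orthogonal projection onto the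
first `L` DFT vectors when `L ≤ N`. -/
noncomputable def partialDFTProjection (N L : ℕ) : Matrix (Fin N) (Fin N) ℂ :=
  of fun n n' => (1 / (N : ℂ)) * ∑ i ∈ range L,
    exp (2 * π * I * (((n' : ℕ) : ℂ) - ((n : ℕ) : ℂ)) * (i : ℂ) / N)

lemma sum_norm_sq_partialDFTProjection {N L : ℕ} (hL : L ≤ N) :
    ∑ n, ∑ n', ‖partialDFTProjection N L n n'‖ ^ 2 = L := by
  simp only [partialDFTProjection, of_apply]
  rcases N.eq_zero_or_pos with rfl | hN
  · simp [Nat.le_zero.1 hL]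
  have hsplit : ∀ (n n' : Fin N) (i i' : ℕ),
      exp (2 * π * I * (((n' : ℕ) : ℂ) - ((n : ℕ) : ℂ)) * (i : ℂ) / N) *
        conj (exp (2 * π * I * (((n' : ℕ) : ℂ) - ((n : ℕ) : ℂ)) * (i' : ℂ) / N)) =
      exp (2 * π * I * (n' : ℕ) * ((i : ℂ) - i') / N) *
        exp (2 * π * I * (n : ℕ) * ((i' : ℂ) - i) / N) := by
    intro n n' i i'
    rw [← exp_conj, ← exp_add, ← exp_add]
    congr 1
    simp only [map_div₀, map_mul, map_sub, conj_I, conj_ofReal, map_natCast, map_ofNat]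
    ring
  apply ofReal_injective
  push_cast
  simp_rw [← mul_conj', map_mul, map_sum, mul_mul_mul_comm, Finset.sum_mul_sum, hsplit,
    map_div₀, map_one, map_natCast]
  calc ∑ n : Fin N, ∑ n' : Fin N, 1 / (N : ℂ) * (1 / N) * ∑ i ∈ range L, ∑ i' ∈ range L,
        exp (2 * π * I * (n' : ℕ) * ((i : ℂ) - i') / N) *
          exp (2 * π * I * (n : ℕ) * ((i' : ℂ) - i) / N)
      = 1 / (N : ℂ) * (1 / N) * ∑ i ∈ range L, ∑ i' ∈ range L,
          (∑ n' : Fin N, exp (2 * π * I * (n' : ℕ) * ((i : ℂ) - i') / N)) *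
          ∑ n : Fin N, exp (2 * π * I * (n : ℕ) * ((i' : ℂ) - i) / N) := by
        simp_rw [← Finset.mul_sum, Finset.sum_mul_sum]
        congr 1
        simp_rw [Finset.sum_comm (s := (univ : Finset (Fin N))) (t := range L)]
        exact Finset.sum_congr rfl fun i _ => Finset.sum_congr rfl fun i' _ => Finset.sum_comm
    _ = L := by
        have hlt : ∀ i ∈ range L, i < N := fun i hi => (mem_range.1 hi).trans_le hL
        rw [Finset.sum_congr rfl fun i hi => Finset.sum_congr rfl fun i' hi' => by
          rw [sum_exp_two_pi_I_mul_sub_div_eq_ite (hlt i hi) (hlt i' hi'),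
            sum_exp_two_pi_I_mul_sub_div_eq_ite (hlt i' hi') (hlt i hi)]]
        simp only [ite_mul, zero_mul]
        rw [Finset.sum_congr rfl fun i hi => by rw [Finset.sum_ite_eq, if_pos hi, if_pos rfl],
          sum_const, card_range, nsmul_eq_mul]
        have hN' : (N : ℂ) ≠ 0 := Nat.cast_ne_zero.2 hN.ne'
        field_simp

lemma Matrix.mul_hadamard_mul_apply {R l m n o : Type*} [CommSemiring R] [Fintype m]
    [Fintype n] (A : Matrix l m R) (D S : Matrix m n R) (B : Matrix n o R) (i : l) (k : o) :
    (A * (D ⊙ S) * B) i k = ∑ j, ∑ j', A i j * D j j' * B j' k * S j j' := by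
  simp only [mul_apply, hadamard_apply, Finset.sum_mul]
  rw [Finset.sum_comm]
  exact Finset.sum_congr rfl fun j _ => Finset.sum_congr rfl fun j' _ => by ring

lemma sum_norm_sq_mul_unimodular_mul {ι₁ ι₂ ι₃ ι₄ : Type*} [Fintype ι₁] [Fintype ι₂]
    [Fintype ι₃] [Fintype ι₄] (A : ι₁ → ι₂ → ℂ) (D : ι₂ → ι₃ → ℂ) (hD : ∀ j k, ‖D j k‖ = 1)
    (B : ι₃ → ι₄ → ℂ) :
    ∑ i, ∑ l, ∑ j, ∑ k, ‖A i j * D j k * B k l‖ ^ 2 =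
      (∑ i, ∑ j, ‖A i j‖ ^ 2) * ∑ k, ∑ l, ‖B k l‖ ^ 2 := by
  simp only [norm_mul, mul_pow, hD, mul_one, Finset.sum_mul_sum]
  refine Finset.sum_congr rfl fun i _ => ?_
  rw [Finset.sum_comm_cycle]
  exact Finset.sum_congr rfl fun k _ => Finset.sum_comm

lemma sum_norm_sq_superdiagonal {M : ℕ} (hM : 0 < M) :
    ∑ j : Fin M, ∑ m : Fin M, ‖(if (m : ℕ) = j + 1 then (1 : ℂ) else 0)‖ ^ 2 = M - 1 := by
  obtain ⟨M, rfl⟩ := Nat.exists_eq_add_one_of_ne_zero hM.ne'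
  have hsucc : ∀ (j : Fin M) (m : Fin (M + 1)), (m : ℕ) = j + 1 ↔ m = j.succ := by
    simp [Fin.ext_iff]
  have hlast : ∀ m : Fin (M + 1), (m : ℕ) ≠ M + 1 := fun m => by omega
  rw [Fin.sum_univ_castSucc]
  simp [hsucc, hlast, apply_ite (fun z : ℂ => ‖z‖ ^ 2)]

theorem stmt5_general {Ω : Type*} [MeasureSpace Ω] [IsProbabilityMeasure (volume : Measure Ω)]
    (N M : ℕ) (hM : 0 < M)
    (Δf Ts Tcp : ℝ) (Ncp : ℕ)
    (Q : ℕ)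
    (τ fd : Fin Q → ℝ) (P : Fin Q → ℝ) (l : Fin Q → ℤ)
    (Qt : ℕ)
    (hl : ∀ q : Fin Q, Qt ≤ (q : ℕ) → (Ncp : ℤ) < l q ∧ l q ≤ (N : ℤ) + (Ncp : ℤ))
    (Φ : Fin Q → Matrix (Fin N) (Fin N) ℂ)
    (hΦ : ∀ q : Fin Q, Qt ≤ (q : ℕ) → ∀ n n' : Fin N,
      Φ q n n' = (1 / (N : ℂ)) * ∑ i ∈ Finset.range (l q - (Ncp : ℤ)).toNat,
        Complex.exp (2 * (Real.pi : ℂ) * Complex.I *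
          (((n' : ℕ) : ℂ) - ((n : ℕ) : ℂ)) * (i : ℂ) / (N : ℂ)))
    (b : ℝ → Fin N → ℂ)
    (hb : ∀ (t : ℝ) (n : Fin N),
      b t n = Complex.exp (-(2 * (Real.pi : ℂ) * Complex.I * ((n : ℕ) : ℂ) * (Δf : ℂ) * (t : ℂ))))
    (c : ℝ → Fin M → ℂ)
    (hc : ∀ (g : ℝ) (m : Fin M),
      c g m = Complex.exp (-(2 * (Real.pi : ℂ) * Complex.I * ((m : ℕ) : ℂ) * (g : ℂ) * (Ts : ℂ))))
    (J₁ : Matrix (Fin M) (Fin M) ℂ)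
    (hJ : ∀ m m' : Fin M, J₁ m m' = if (m' : ℕ) = (m : ℕ) + 1 then 1 else 0)
    (s : Fin N × Fin M → Ω → ℂ) (α : Fin Q → Ω → ℂ)
    (hindep : iIndepFun (Sum.elim α s) volume)
    (hsL4 : ∀ A : Fin N × Fin M, MemLp (s A) 4 volume)
    (hsmean : ∀ A : Fin N × Fin M, ∫ ω, s A ω = 0)
    (hsabs2 : ∀ A : Fin N × Fin M, ∫ ω, ‖s A ω‖ ^ 2 = 1)
    (hαL2 : ∀ q : Fin Q, MemLp (α q) 2 volume)
    (hαmean : ∀ q : Fin Q, ∫ ω, α q ω = 0)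
    (hαabs2 : ∀ q : Fin Q, ∫ ω, ‖α q ω‖ ^ 2 = P q)
    (YISI : Ω → Matrix (Fin N) (Fin M) ℂ)
    (hY : ∀ ω, YISI ω = ∑ q ∈ Finset.univ.filter (fun q : Fin Q => Qt ≤ (q : ℕ)),
      α q ω • (Φ q *
        ((Matrix.of fun n m => b (τ q - Tcp) n * (starRingEnd ℂ) (c (fd q) m)) ⊙
          (Matrix.of fun n m => s (n, m) ω)) * J₁)) :
    ∫ ω, ∑ n : Fin N, ∑ m : Fin M, ‖YISI ω n m‖ ^ 2 =
      ((M : ℝ) - 1) * ∑ q ∈ Finset.univ.filter (fun q : Fin Q => Qt ≤ (q : ℕ)),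
        ((l q : ℝ) - (Ncp : ℝ)) * P q := by
  set F := Finset.univ.filter (fun q : Fin Q => Qt ≤ (q : ℕ))
  have hαs : IsL2Orthogonal (fun (p : Fin Q × (Fin N × Fin M)) ω => α p.1 ω * s p.2 ω)
      (fun p => P p.1 * 1) volume :=
    hindep.isL2Orthogonal_mul hαL2 (fun A => (hsL4 A).mono_exponent (by norm_num))
      hαmean hsmean hαabs2 hsabs2
  set D : Fin Q → Fin N → Fin M → ℂ := fun q k j => b (τ q - Tcp) k * conj (c (fd q) j)
  have hD : ∀ q k j, ‖D q k j‖ = 1 := by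
    simp [D, hb, hc, Complex.norm_exp]
  have hentry : ∀ ω n m, YISI ω n m = ∑ t ∈ F ×ˢ (univ : Finset (Fin N × Fin M)),
      Φ t.1 n t.2.1 * D t.1 t.2.1 t.2.2 * J₁ t.2.2 m * (α t.1 ω * s t.2 ω) := by
    intro ω n m
    simp only [hY, Matrix.sum_apply, Matrix.smul_apply, mul_hadamard_mul_apply, of_apply,
      smul_eq_mul, Finset.sum_product, Fintype.sum_prod_type, Finset.mul_sum]
    exact Finset.sum_congr rfl fun q _ => Finset.sum_congr rfl fun k _ =>
      Finset.sum_congr rfl fun j _ => by ring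
  have hcoeff : ∀ q ∈ F, ∑ n, ∑ m, ∑ k, ∑ j, ‖Φ q n k * D q k j * J₁ j m‖ ^ 2 =
      ((l q : ℝ) - Ncp) * (M - 1) := by
    intro q hq
    obtain ⟨hlq, hlqN⟩ := hl q (Finset.mem_filter.1 hq).2
    have hΦq : Φ q = partialDFTProjection N (l q - Ncp).toNat :=
      ext (hΦ q (Finset.mem_filter.1 hq).2)
    have hL : (((l q - Ncp).toNat : ℕ) : ℝ) = l q - Ncp := by
      rw [← Int.cast_natCast, Int.toNat_of_nonneg (by omega)]
      push_cast; ring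
    rw [sum_norm_sq_mul_unimodular_mul (Φ q) (D q) (hD q) J₁, hΦq,
      sum_norm_sq_partialDFTProjection (by omega), hL]
    simp only [hJ]
    rw [sum_norm_sq_superdiagonal hM]
  calc ∫ ω, ∑ n, ∑ m, ‖YISI ω n m‖ ^ 2
      = ∫ ω, ∑ p : Fin N × Fin M, ‖∑ t ∈ F ×ˢ (univ : Finset (Fin N × Fin M)),
          Φ t.1 p.1 t.2.1 * D t.1 t.2.1 t.2.2 * J₁ t.2.2 p.2 * (α t.1 ω * s t.2 ω)‖ ^ 2 := by
        simp_rw [hentry, Fintype.sum_prod_type]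
    _ = ∑ p : Fin N × Fin M, ∑ t ∈ F ×ˢ (univ : Finset (Fin N × Fin M)),
          ‖Φ t.1 p.1 t.2.1 * D t.1 t.2.1 t.2.2 * J₁ t.2.2 p.2‖ ^ 2 * (P t.1 * 1) :=
        hαs.integral_sum_norm_sq_sum _ _
    _ = ∑ q ∈ F, P q * ∑ n, ∑ m, ∑ k, ∑ j, ‖Φ q n k * D q k j * J₁ j m‖ ^ 2 := by
        rw [Finset.sum_comm, Finset.sum_product]
        refine Finset.sum_congr rfl fun q _ => ?_
        rw [Finset.sum_comm]
        simp only [mul_one, ← Finset.sum_mul, Fintype.sum_prod_type]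
        exact mul_comm _ _
    _ = _ := by
        rw [Finset.mul_sum]
        exact Finset.sum_congr rfl fun q hq => by rw [hcoeff q hq]; ring

/-- `E[‖Y_ISI‖_F²] = (M−1)·∑_{q=Q̃+1}^{Q} (l_q − N_cp)·P_q`. -/
theorem stmt5 {Ω : Type*} [MeasureSpace Ω] [IsProbabilityMeasure (volume : Measure Ω)]
    (N M : ℕ) (hN : 0 < N) (hM : 0 < M)
    (Δf Ts Tcp : ℝ) (hΔf : 0 < Δf) (hTs : 0 < Ts) (hTcp : 0 < Tcp) (Ncp : ℕ)
    (Q : ℕ) (hQ : 1 ≤ Q)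
    (τ fd : Fin Q → ℝ) (P : Fin Q → ℝ) (l : Fin Q → ℤ)
    (Qt : ℕ) (hQt : Qt ≤ Q)
    (hl : ∀ q : Fin Q, Qt ≤ (q : ℕ) → (Ncp : ℤ) < l q ∧ l q ≤ (N : ℤ) + (Ncp : ℤ))
    (Φ : Fin Q → Matrix (Fin N) (Fin N) ℂ)
    (hΦ : ∀ q : Fin Q, Qt ≤ (q : ℕ) → ∀ n n' : Fin N,
      Φ q n n' = (1 / (N : ℂ)) * ∑ i ∈ Finset.range (l q - (Ncp : ℤ)).toNat,
        Complex.exp (2 * (Real.pi : ℂ) * Complex.I *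
          (((n' : ℕ) : ℂ) - ((n : ℕ) : ℂ)) * (i : ℂ) / (N : ℂ)))
    (b : ℝ → Fin N → ℂ)
    (hb : ∀ (t : ℝ) (n : Fin N),
      b t n = Complex.exp (-(2 * (Real.pi : ℂ) * Complex.I * ((n : ℕ) : ℂ) * (Δf : ℂ) * (t : ℂ))))
    (c : ℝ → Fin M → ℂ)
    (hc : ∀ (g : ℝ) (m : Fin M),
      c g m = Complex.exp (-(2 * (Real.pi : ℂ) * Complex.I * ((m : ℕ) : ℂ) * (g : ℂ) * (Ts : ℂ))))
    (J₁ : Matrix (Fin M) (Fin M) ℂ)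
    (hJ : ∀ m m' : Fin M, J₁ m m' = if (m' : ℕ) = (m : ℕ) + 1 then 1 else 0)
    (s : Fin N × Fin M → Ω → ℂ) (α : Fin Q → Ω → ℂ)
    (hindep : iIndepFun (Sum.elim α s) volume)
    (hident : ∀ A B : Fin N × Fin M, IdentDistrib (s A) (s B) volume volume)
    (hsL4 : ∀ A : Fin N × Fin M, MemLp (s A) 4 volume)
    (hsmean : ∀ A : Fin N × Fin M, ∫ ω, s A ω = 0)
    (hssq : ∀ A : Fin N × Fin M, ∫ ω, (s A ω) ^ 2 = 0)
    (hsabs2 : ∀ A : Fin N × Fin M, ∫ ω, ‖s A ω‖ ^ 2 = 1)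
    (hαL2 : ∀ q : Fin Q, MemLp (α q) 2 volume)
    (hαmean : ∀ q : Fin Q, ∫ ω, α q ω = 0)
    (hαabs2 : ∀ q : Fin Q, ∫ ω, ‖α q ω‖ ^ 2 = P q)
    (YISI : Ω → Matrix (Fin N) (Fin M) ℂ)
    (hY : ∀ ω, YISI ω = ∑ q ∈ Finset.univ.filter (fun q : Fin Q => Qt ≤ (q : ℕ)),
      α q ω • (Φ q *
        ((Matrix.of fun n m => b (τ q - Tcp) n * (starRingEnd ℂ) (c (fd q) m)) ⊙
          (Matrix.of fun n m => s (n, m) ω)) * J₁)) :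
    ∫ ω, ∑ n : Fin N, ∑ m : Fin M, ‖YISI ω n m‖ ^ 2 =
      ((M : ℝ) - 1) * ∑ q ∈ Finset.univ.filter (fun q : Fin Q => Qt ≤ (q : ℕ)),
        ((l q : ℝ) - (Ncp : ℝ)) * P q :=
  stmt5_general N M hM Δf Ts Tcp Ncp Q τ fd P l Qt hl Φ hΦ b hb c hc J₁ hJ s α hindep hsL4 hsmean
    hsabs2 hαL2 hαmean hαabs2 YISI hY
end

section
/- The ISI and ICI components are uncorrelated: E[Tr(Y_ISI^H · Y_ICI)] = 0. -/
open MeasureTheory ProbabilityTheory Finset Matrix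

/-
Expanding the trace, `Tr(Y_ISIᴴ Y_ICI)` is a linear combination of the monomials
`conj α_q · α_q' · conj s_{k,m'} · s_{k',m}` with coefficient proportional to `conj J₁[m',m]`,
which vanishes unless `m' = m + 1`; so only monomials in two distinct symbols survive. For those,
independence factorises the expectation as `E[conj α_q α_q'] · E[conj s_{k,m'}] · E[s_{k',m}] = 0`.
Centred integrable functions form a submodule, so the linear combination is centred too.
-/

namespace MeasureTheory

variable {Ω E : Type*} {mΩ : MeasurableSpace Ω} [NormedAddCommGroup E] [NormedSpace ℝ E]

def centeredIntegrable (𝕜 : Type*) [NormedField 𝕜] [NormedSpace 𝕜 E] [SMulCommClass ℝ 𝕜 E]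
    (μ : Measure Ω) : Submodule 𝕜 (Ω → E) where
  carrier := {X | Integrable X μ ∧ ∫ ω, X ω ∂μ = 0}
  zero_mem' := ⟨integrable_zero _ _ _, integral_zero _ _⟩
  add_mem' := fun ⟨hX, hX0⟩ ⟨hY, hY0⟩ =>
    ⟨hX.add hY, by simp only [Pi.add_apply, integral_add hX hY, hX0, hY0, add_zero]⟩
  smul_mem' := fun c _ ⟨hX, hX0⟩ =>
    ⟨hX.smul c, by simp only [Pi.smul_apply, integral_smul, hX0, smul_zero]⟩

end MeasureTheory

namespace ProbabilityTheory

variable {Ω ι : Type*} {mΩ : MeasurableSpace Ω} {μ : Measure Ω}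

lemma IndepFun.integral_star_mul_eq_zero {X Y : Ω → ℂ} (h : X ⟂ᵢ[μ] Y)
    (hX : AEStronglyMeasurable X μ) (hY : AEStronglyMeasurable Y μ) (hY0 : ∫ ω, Y ω ∂μ = 0) :
    ∫ ω, star (X ω) * Y ω ∂μ = 0 := by
  have hstar : (star ∘ X) ⟂ᵢ[μ] Y := h.comp continuous_star.measurable measurable_id
  simpa [hY0] using hstar.integral_fun_mul_eq_mul_integral hX.star hY

lemma iIndepFun.star_mul_star_mul_mem_centeredIntegrable {f : ι → Ω → ℂ} (h : iIndepFun f μ)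
    (hf : ∀ i, MemLp (f i) 2 μ) {i j k l : ι} (hik : i ≠ k) (hil : i ≠ l) (hjk : j ≠ k)
    (hjl : j ≠ l) (hkl : k ≠ l) (hl0 : ∫ ω, f l ω ∂μ = 0) :
    (fun ω => star (f i ω) * f j ω * (star (f k ω) * f l ω)) ∈ centeredIntegrable ℂ μ := by
  have hmeas : ∀ i, AEMeasurable (f i) μ := fun i => (hf i).1.aemeasurable
  have hpair : (fun ω => (f i ω, f j ω)) ⟂ᵢ[μ] (fun ω => (f k ω, f l ω)) :=
    h.indepFun_prodMk_prodMk₀ hmeas i j k l hik hil hjk hjl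
  have hmul : Measurable fun p : ℂ × ℂ => star p.1 * p.2 := by fun_prop
  have hprod : (fun ω => star (f i ω) * f j ω) ⟂ᵢ[μ] (fun ω => star (f k ω) * f l ω) :=
    hpair.comp hmul hmul
  have hij_int : Integrable (fun ω => star (f i ω) * f j ω) μ :=
    (hf i).star.integrable_mul (hf j)
  have hkl_int : Integrable (fun ω => star (f k ω) * f l ω) μ :=
    (hf k).star.integrable_mul (hf l)
  refine ⟨hprod.integrable_mul hij_int hkl_int, ?_⟩
  rw [hprod.integral_fun_mul_eq_mul_integral hij_int.1 hkl_int.1,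
    (h.indepFun hkl).integral_star_mul_eq_zero (hf k).1 (hf l).1 hl0, mul_zero]

end ProbabilityTheory

namespace Matrix

variable {ι l m R : Type*} [Fintype l] [Fintype m] [CommRing R] [StarRing R]

theorem trace_conjTranspose_sum_smul_mul_sum_smul (F G : Finset ι) (a b : ι → R)
    (U V : ι → Matrix l m R) :
    trace ((∑ q ∈ F, a q • U q)ᴴ * ∑ q' ∈ G, b q' • V q') =
      ∑ q ∈ F, ∑ q' ∈ G, star (a q) * b q' * trace ((U q)ᴴ * V q') := by
  simp only [conjTranspose_sum, conjTranspose_smul, Matrix.sum_mul, Matrix.mul_sum, smul_mul,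
    Matrix.mul_smul, trace_sum, trace_smul, smul_eq_mul, Finset.mul_sum]
  exact Finset.sum_comm.trans (sum_congr rfl fun _ _ => sum_congr rfl fun _ _ => by ring)

theorem trace_conjTranspose_mul_hadamard_mul (A A' : Matrix l l R) (X X' S : Matrix l m R)
    (J : Matrix m m R) :
    trace ((A * (X ⊙ S) * J)ᴴ * (A' * (X' ⊙ S))) =
      ∑ j, ∑ j', ∑ i, ∑ i', star (J j' j) * star (X i j') * X' i' j * (Aᴴ * A') i i' *
        (star (S i j') * S i' j) := by
  simp only [trace, diag, mul_apply, conjTranspose_apply, hadamard_apply, star_sum, star_mul',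
    Finset.sum_mul, Finset.mul_sum]
  -- bring the row index `n` of `A` and `A'` innermost
  refine sum_congr rfl fun j _ => ?_
  rw [Finset.sum_comm]
  refine (sum_congr rfl fun i' _ =>
    Finset.sum_comm.trans (sum_congr rfl fun j' _ => Finset.sum_comm)).trans ?_
  rw [Finset.sum_comm]
  refine sum_congr rfl fun j' _ => ?_
  rw [Finset.sum_comm]
  refine sum_congr rfl fun i _ => sum_congr rfl fun i' _ => sum_congr rfl fun n _ => ?_
  ring

theorem mul_trace_conjTranspose_mul_hadamard_mul_mem {Ω : Type*} (C : Submodule R (Ω → R))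
    (A A' : Matrix l l R) (X X' : Matrix l m R) {J : Matrix m m R} (hJ : ∀ j, J j j = 0)
    (a : Ω → R) (S : Ω → Matrix l m R)
    (hS : ∀ i j' i' j, j' ≠ j → (fun ω => a ω * (star (S ω i j') * S ω i' j)) ∈ C) :
    (fun ω => a ω * trace ((A * (X ⊙ S ω) * J)ᴴ * (A' * (X' ⊙ S ω)))) ∈ C := by
  have hexpand : (fun ω => a ω * trace ((A * (X ⊙ S ω) * J)ᴴ * (A' * (X' ⊙ S ω)))) =
      ∑ j, ∑ j', ∑ i, ∑ i', (star (J j' j) * star (X i j') * X' i' j * (Aᴴ * A') i i') •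
        fun ω => a ω * (star (S ω i j') * S ω i' j) := by
    funext ω
    simp only [trace_conjTranspose_mul_hadamard_mul, Finset.sum_apply, Pi.smul_apply,
      smul_eq_mul, Finset.mul_sum]
    refine sum_congr rfl fun j _ => sum_congr rfl fun j' _ => sum_congr rfl fun i _ =>
      sum_congr rfl fun i' _ => ?_
    ring
  rw [hexpand]
  refine C.sum_mem fun j _ => C.sum_mem fun j' _ => C.sum_mem fun i _ => C.sum_mem fun i' _ => ?_
  rcases eq_or_ne j' j with rfl | hj
  · simp [hJ]
  · exact C.smul_mem _ (hS i j' i' j hj)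

end Matrix

theorem stmt6_general {Ω : Type*} [MeasureSpace Ω] [IsProbabilityMeasure (volume : Measure Ω)]
    (N M : ℕ) (Tcp : ℝ) (Q : ℕ) (τ fd : Fin Q → ℝ) (Qt : ℕ)
    (Φ : Fin Q → Matrix (Fin N) (Fin N) ℂ) (b : ℝ → Fin N → ℂ) (c : ℝ → Fin M → ℂ)
    (J₁ : Matrix (Fin M) (Fin M) ℂ)
    (hJ : ∀ m m' : Fin M, J₁ m m' = if (m' : ℕ) = (m : ℕ) + 1 then 1 else 0)
    (s : Fin N × Fin M → Ω → ℂ) (α : Fin Q → Ω → ℂ)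
    (hindep : iIndepFun (Sum.elim α s) volume)
    (hsL4 : ∀ A : Fin N × Fin M, MemLp (s A) 4 volume)
    (hsmean : ∀ A : Fin N × Fin M, ∫ ω, s A ω = 0)
    (hαL2 : ∀ q : Fin Q, MemLp (α q) 2 volume)
    (YISI YICI : Ω → Matrix (Fin N) (Fin M) ℂ)
    (hYISI : ∀ ω, YISI ω = ∑ q ∈ Finset.univ.filter (fun q : Fin Q => Qt ≤ (q : ℕ)),
      α q ω • (Φ q *
        ((Matrix.of fun n m => b (τ q - Tcp) n * (starRingEnd ℂ) (c (fd q) m)) ⊙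
          (Matrix.of fun n m => s (n, m) ω)) * J₁))
    (hYICI : ∀ ω, YICI ω = ∑ q ∈ Finset.univ.filter (fun q : Fin Q => Qt ≤ (q : ℕ)),
      α q ω • (Φ q *
        ((Matrix.of fun n m => b (τ q) n * (starRingEnd ℂ) (c (fd q) m)) ⊙
          (Matrix.of fun n m => s (n, m) ω)))) :
    ∫ ω, Matrix.trace ((YISI ω)ᴴ * YICI ω) = 0 := by
  have hL2 : ∀ i, MemLp (Sum.elim α s i) 2 volume := by
    rintro (q | A)
    exacts [hαL2 q, (hsL4 A).mono_exponent (by norm_num)]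
  have hmonomial : ∀ q q' (A B : Fin N × Fin M), A ≠ B →
      (fun ω => star (α q ω) * α q' ω * (star (s A ω) * s B ω)) ∈ centeredIntegrable ℂ volume :=
    fun q q' A B hAB => hindep.star_mul_star_mul_mem_centeredIntegrable hL2
      (i := .inl q) (j := .inl q') (k := .inr A) (l := .inr B) Sum.inl_ne_inr Sum.inl_ne_inr
      Sum.inl_ne_inr Sum.inl_ne_inr (Sum.inr_injective.ne hAB) (hsmean B)
  have hJ₁ : ∀ m, J₁ m m = 0 := by simp [hJ]
  have hmem : (fun ω => trace ((YISI ω)ᴴ * YICI ω)) ∈ centeredIntegrable ℂ volume := by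
    simp only [hYISI, hYICI, trace_conjTranspose_sum_smul_mul_sum_smul]
    rw [← Finset.sum_fn]
    refine sum_mem fun q _ => ?_
    rw [← Finset.sum_fn]
    exact sum_mem fun q' _ =>
      mul_trace_conjTranspose_mul_hadamard_mul_mem _ _ _ _ _ hJ₁ _ _ fun i j' i' j hj =>
        hmonomial q q' (i, j') (i', j) (ne_of_apply_ne Prod.snd hj)
  exact hmem.2

/-- the ISI and ICI components are uncorrelated:
`E[Tr(Y_ISIᴴ · Y_ICI)] = 0`. -/
theorem stmt6 {Ω : Type*} [MeasureSpace Ω] [IsProbabilityMeasure (volume : Measure Ω)]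
    (N M : ℕ) (hN : 0 < N) (hM : 0 < M)
    (Δf Ts Tcp : ℝ) (hΔf : 0 < Δf) (hTs : 0 < Ts) (hTcp : 0 < Tcp) (Ncp : ℕ)
    (Q : ℕ) (hQ : 1 ≤ Q)
    (τ fd : Fin Q → ℝ) (P : Fin Q → ℝ) (l : Fin Q → ℤ)
    (Qt : ℕ) (hQt : Qt ≤ Q)
    (hl : ∀ q : Fin Q, Qt ≤ (q : ℕ) → (Ncp : ℤ) < l q ∧ l q ≤ (N : ℤ) + (Ncp : ℤ))
    (Φ : Fin Q → Matrix (Fin N) (Fin N) ℂ)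
    (hΦ : ∀ q : Fin Q, Qt ≤ (q : ℕ) → ∀ n n' : Fin N,
      Φ q n n' = (1 / (N : ℂ)) * ∑ i ∈ Finset.range (l q - (Ncp : ℤ)).toNat,
        Complex.exp (2 * (Real.pi : ℂ) * Complex.I *
          (((n' : ℕ) : ℂ) - ((n : ℕ) : ℂ)) * (i : ℂ) / (N : ℂ)))
    (b : ℝ → Fin N → ℂ)
    (hb : ∀ (t : ℝ) (n : Fin N),
      b t n = Complex.exp (-(2 * (Real.pi : ℂ) * Complex.I * ((n : ℕ) : ℂ) * (Δf : ℂ) * (t : ℂ))))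
    (c : ℝ → Fin M → ℂ)
    (hc : ∀ (g : ℝ) (m : Fin M),
      c g m = Complex.exp (-(2 * (Real.pi : ℂ) * Complex.I * ((m : ℕ) : ℂ) * (g : ℂ) * (Ts : ℂ))))
    (J₁ : Matrix (Fin M) (Fin M) ℂ)
    (hJ : ∀ m m' : Fin M, J₁ m m' = if (m' : ℕ) = (m : ℕ) + 1 then 1 else 0)
    (s : Fin N × Fin M → Ω → ℂ) (α : Fin Q → Ω → ℂ)
    (hindep : iIndepFun (Sum.elim α s) volume)
    (hident : ∀ A B : Fin N × Fin M, IdentDistrib (s A) (s B) volume volume)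
    (hsL4 : ∀ A : Fin N × Fin M, MemLp (s A) 4 volume)
    (hsmean : ∀ A : Fin N × Fin M, ∫ ω, s A ω = 0)
    (hssq : ∀ A : Fin N × Fin M, ∫ ω, (s A ω) ^ 2 = 0)
    (hsabs2 : ∀ A : Fin N × Fin M, ∫ ω, ‖s A ω‖ ^ 2 = 1)
    (hαL2 : ∀ q : Fin Q, MemLp (α q) 2 volume)
    (hαmean : ∀ q : Fin Q, ∫ ω, α q ω = 0)
    (hαabs2 : ∀ q : Fin Q, ∫ ω, ‖α q ω‖ ^ 2 = P q)
    (YISI YICI : Ω → Matrix (Fin N) (Fin M) ℂ)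
    (hYISI : ∀ ω, YISI ω = ∑ q ∈ Finset.univ.filter (fun q : Fin Q => Qt ≤ (q : ℕ)),
      α q ω • (Φ q *
        ((Matrix.of fun n m => b (τ q - Tcp) n * (starRingEnd ℂ) (c (fd q) m)) ⊙
          (Matrix.of fun n m => s (n, m) ω)) * J₁))
    (hYICI : ∀ ω, YICI ω = ∑ q ∈ Finset.univ.filter (fun q : Fin Q => Qt ≤ (q : ℕ)),
      α q ω • (Φ q *
        ((Matrix.of fun n m => b (τ q) n * (starRingEnd ℂ) (c (fd q) m)) ⊙
          (Matrix.of fun n m => s (n, m) ω)))) :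
    ∫ ω, Matrix.trace ((YISI ω)ᴴ * YICI ω) = 0 :=
  stmt6_general N M Tcp Q τ fd Qt Φ b c J₁ hJ s α hindep hsL4 hsmean hαL2 YISI YICI hYISI hYICI
end

section
/- For all integers l and ν, the interference-free and ISI components of the range-Doppler map are uncorrelated: E[χ_free(l,ν)·conj(χ_ISI(l,ν))] = 0. -/
open MeasureTheory ProbabilityTheory Complex Finset Matrix
open ComplexConjugate

/-!
Expanding both range-Doppler components, `E[χ_free · conj χ_ISI]` becomes a combination, with
deterministic coefficients, of the moments `E[α_q |s_A|² · conj α_q' · conj s_B · s_C]`, where `B`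
lies in symbol slot `m - 1` and `C` in slot `m`, so `B ≠ C`. Independence splits off the
`α`-factor, and one of `s_B`, `s_C` carries an index different from the other two symbol indices:
that symbol is centred and independent of the rest, so every moment vanishes.
-/

section Moments

variable {Ω ι κ : Type*} [MeasurableSpace Ω] {μ : Measure Ω}

lemma ProbabilityTheory.iIndepFun.indepFun_sumElim [Fintype ι] [Fintype κ] {β : Type*}
    [MeasurableSpace β] {α : ι → Ω → β} {s : κ → Ω → β} (h : iIndepFun (Sum.elim α s) μ)
    (hα : ∀ i, AEMeasurable (α i) μ) (hs : ∀ k, AEMeasurable (s k) μ) :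
    IndepFun (fun ω i ↦ α i ω) (fun ω k ↦ s k ω) μ :=
  (h.indepFun_finset₀ _ _ (disjoint_map_inl_map_inr univ univ) fun i ↦ i.rec hα hs).comp
    (φ := fun x i ↦ x ⟨.inl i, by simp⟩) (ψ := fun x k ↦ x ⟨.inr k, by simp⟩)
    (measurable_pi_lambda _ fun _ ↦ measurable_pi_apply _)
    (measurable_pi_lambda _ fun _ ↦ measurable_pi_apply _)

lemma integral_mul_conj_mul_conj_mul_eq_zero {s : κ → Ω → ℂ} (h : iIndepFun s μ)
    (hs : ∀ k, AEMeasurable (s k) μ) (h0 : ∀ k, ∫ ω, s k ω ∂μ = 0) (A : κ) {B C : κ}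
    (hBC : B ≠ C) :
    ∫ ω, s A ω * conj (s A ω) * (conj (s B ω) * s C ω) ∂μ = 0 := by
  by_cases hAB : A = B
  · subst hAB
    have hi : IndepFun (fun ω ↦ s A ω * conj (s A ω) * conj (s A ω)) (s C) μ :=
      (h.indepFun hBC).comp (φ := fun z ↦ z * conj z * conj z) (ψ := id)
        (by fun_prop) measurable_id
    calc _ = ∫ ω, s A ω * conj (s A ω) * conj (s A ω) * s C ω ∂μ := by simp only [mul_assoc]
      _ = 0 := by
        rw [hi.integral_fun_mul_eq_mul_integral (by fun_prop) (hs C).aestronglyMeasurable, h0 C,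
          mul_zero]
  · have hi : IndepFun (fun ω ↦ s A ω * conj (s A ω) * s C ω) (fun ω ↦ conj (s B ω)) μ :=
      (h.indepFun_prodMk₀ hs A C B hAB hBC.symm).comp
        (φ := fun x : ℂ × ℂ ↦ x.1 * conj x.1 * x.2) (ψ := conj) (by fun_prop) (by fun_prop)
    calc _ = ∫ ω, s A ω * conj (s A ω) * s C ω * conj (s B ω) ∂μ := by
          congr 1; ext ω; ring
      _ = 0 := by
        rw [hi.integral_fun_mul_eq_mul_integral (by fun_prop) (by fun_prop), integral_conj, h0 B,
          map_zero, mul_zero]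

lemma integrable_mul_conj_mul_conj_mul {s : κ → Ω → ℂ} (hs : ∀ k, MemLp (s k) 4 μ) (A B C : κ) :
    Integrable (fun ω ↦ s A ω * conj (s A ω) * (conj (s B ω) * s C ω)) μ := by
  have : ENNReal.HolderTriple 4 4 2 :=
    ⟨by convert ENNReal.add_halves (2 : ENNReal)⁻¹ using 2 <;>
      norm_num [div_eq_mul_inv, ← ENNReal.mul_inv]⟩
  have hAA : MemLp (fun ω ↦ s A ω * conj (s A ω)) 2 μ := (hs A).star.mul' (hs A)
  have hBC : MemLp (fun ω ↦ conj (s B ω) * s C ω) 2 μ := (hs C).mul' (hs B).star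
  exact hAA.integrable_mul hBC

lemma integrable_and_integral_monomial_eq_zero [Fintype ι] [Fintype κ] {α : ι → Ω → ℂ}
    {s : κ → Ω → ℂ} (h : iIndepFun (Sum.elim α s) μ) (hα : ∀ i, MemLp (α i) 2 μ)
    (hs : ∀ k, MemLp (s k) 4 μ) (h0 : ∀ k, ∫ ω, s k ω ∂μ = 0) (i i' : ι) (A : κ) {B C : κ}
    (hBC : B ≠ C) :
    Integrable (fun ω ↦
      α i ω * (s A ω * conj (s A ω)) * (conj (α i' ω) * (conj (s B ω) * s C ω))) μ ∧
    ∫ ω, α i ω * (s A ω * conj (s A ω)) * (conj (α i' ω) * (conj (s B ω) * s C ω)) ∂μ = 0 := by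
  have hsplit : IndepFun (fun ω ↦ α i ω * conj (α i' ω))
      (fun ω ↦ s A ω * conj (s A ω) * (conj (s B ω) * s C ω)) μ :=
    (h.indepFun_sumElim (fun j ↦ (hα j).aemeasurable) fun k ↦ (hs k).aemeasurable).comp
      (φ := fun x : ι → ℂ ↦ x i * conj (x i'))
      (ψ := fun y : κ → ℂ ↦ y A * conj (y A) * (conj (y B) * y C))
      (by fun_prop) (by fun_prop)
  have hfactor : (fun ω ↦
      α i ω * (s A ω * conj (s A ω)) * (conj (α i' ω) * (conj (s B ω) * s C ω))) =
      fun ω ↦ α i ω * conj (α i' ω) * (s A ω * conj (s A ω) * (conj (s B ω) * s C ω)) := by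
    ext ω; ring
  have hαint : Integrable (fun ω ↦ α i ω * conj (α i' ω)) μ :=
    (hα i).integrable_mul (hα i').star
  have hsint := integrable_mul_conj_mul_conj_mul hs A B C
  have hs' : iIndepFun s μ := h.precomp (g := Sum.inr) Sum.inr_injective
  rw [hfactor]
  refine ⟨hsplit.integrable_mul hαint hsint, ?_⟩
  rw [hsplit.integral_fun_mul_eq_mul_integral hαint.1 hsint.1,
    integral_mul_conj_mul_conj_mul_eq_zero hs' (fun k ↦ (hs k).aemeasurable) h0 A hBC, mul_zero]

lemma integral_sum_mul_sum_eq_zero {ι κ : Type*} (I : Finset ι) (K : Finset κ) (a : ι → ℂ)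
    (b : κ → ℂ) (U : ι → Ω → ℂ) (V : κ → Ω → ℂ)
    (h : ∀ i ∈ I, ∀ k ∈ K, Integrable (fun ω ↦ U i ω * V k ω) μ ∧ ∫ ω, U i ω * V k ω ∂μ = 0) :
    ∫ ω, (∑ i ∈ I, a i * U i ω) * ∑ k ∈ K, b k * V k ω ∂μ = 0 := by
  have hterm : ∀ i ∈ I, ∀ k ∈ K, Integrable (fun ω ↦ a i * U i ω * (b k * V k ω)) μ ∧
      ∫ ω, a i * U i ω * (b k * V k ω) ∂μ = 0 := fun i hi k hk ↦ by
    have hcoef : (fun ω ↦ a i * U i ω * (b k * V k ω)) =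
        fun ω ↦ a i * b k * (U i ω * V k ω) := by
      ext ω; ring
    rw [hcoef, integral_const_mul, (h i hi k hk).2, mul_zero]
    exact ⟨(h i hi k hk).1.const_mul _, rfl⟩
  simp_rw [Finset.sum_mul_sum]
  rw [integral_finsetSum _ fun i hi ↦ integrable_finsetSum _ fun k hk ↦ (hterm i hi k hk).1]
  refine sum_eq_zero fun i hi ↦ ?_
  rw [integral_finsetSum _ fun k hk ↦ (hterm i hi k hk).1]
  exact sum_eq_zero fun k hk ↦ (hterm i hi k hk).2

end Moments

section Expansion

variable {N M Q : ℕ} (α : Fin Q → ℂ) (s : Fin N × Fin (M + 1) → ℂ) {y : Fin N → Fin M → ℂ}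
  {c : ℂ} {F₁ : Fin N → ℂ} {F₂ : Fin M → ℂ}

lemma rdm_free_eq_sum {E₁ : Fin Q → Fin N → ℂ} {E₂ : Fin Q → Fin M → ℂ}
    (hy : ∀ n m, y n m = ∑ q, α q * s (n, m.succ) * E₁ q n * E₂ q m) :
    c * ∑ n, ∑ m, y n m * conj (s (n, m.succ)) * F₁ n * F₂ m =
      ∑ p : Fin N × Fin M × Fin Q, c * E₁ p.2.2 p.1 * E₂ p.2.2 p.2.1 * F₁ p.1 * F₂ p.2.1 *
        (α p.2.2 * (s (p.1, p.2.1.succ) * conj (s (p.1, p.2.1.succ)))) := by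
  simp only [hy, Fintype.sum_prod_type, mul_sum, sum_mul]
  exact sum_congr rfl fun n _ ↦ sum_congr rfl fun m _ ↦ sum_congr rfl fun q _ ↦ by ring

lemma conj_rdm_isi_eq_sum {T : Finset (Fin Q)} {G : Fin Q → Fin M → ℂ} {H : Fin Q → Fin N → ℂ}
    {Φ : Fin Q → Fin N → Fin N → ℂ}
    (hy : ∀ n m, y n m = ∑ q ∈ T, α q * G q m * ∑ n', s (n', m.castSucc) * H q n' * Φ q n n') :
    conj (c * ∑ n, ∑ m, y n m * conj (s (n, m.succ)) * F₁ n * F₂ m) =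
      ∑ p ∈ univ ×ˢ univ ×ˢ T ×ˢ univ,
        conj (c * G p.2.2.1 p.2.1 * H p.2.2.1 p.2.2.2 * Φ p.2.2.1 p.1 p.2.2.2 * F₁ p.1 *
          F₂ p.2.1) *
        (conj (α p.2.2.1) * (conj (s (p.2.2.2, p.2.1.castSucc)) * s (p.1, p.2.1.succ))) := by
  simp only [hy, map_mul, map_sum, conj_conj, sum_product, mul_sum, sum_mul]
  exact sum_congr rfl fun n _ ↦ sum_congr rfl fun m _ ↦ sum_congr rfl fun q _ ↦
    sum_congr rfl fun n' _ ↦ by ring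

end Expansion

theorem stmt11_general {Ω : Type*} [MeasureSpace Ω]
    (N M : ℕ)
    (Δf Ts Tcp : ℝ)
    (Q : ℕ)
    (τ fd : Fin Q → ℝ)
    (Qt : ℕ)
    (Φ : Fin Q → Matrix (Fin N) (Fin N) ℂ)
    (s : Fin N × Fin (M + 1) → Ω → ℂ) (α : Fin Q → Ω → ℂ)
    (hindep : iIndepFun (Sum.elim α s) volume)
    (hsL4 : ∀ A : Fin N × Fin (M + 1), MemLp (s A) 4 volume)
    (hsmean : ∀ A : Fin N × Fin (M + 1), ∫ ω, s A ω = 0)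
    (hαL2 : ∀ q : Fin Q, MemLp (α q) 2 volume)
    (yfree : Ω → Fin N → Fin M → ℂ)
    (hyfree : ∀ (ω : Ω) (n : Fin N) (m : Fin M), yfree ω n m =
      ∑ q : Fin Q, α q ω * s (n, m.succ) ω *
        Complex.exp (-(2 * (Real.pi : ℂ) * Complex.I * ((n : ℕ) : ℂ) * (Δf : ℂ) * ((τ q : ℝ) : ℂ))) *
        Complex.exp (2 * (Real.pi : ℂ) * Complex.I * ((m : ℕ) : ℂ) * ((fd q : ℝ) : ℂ) * (Ts : ℂ)))
    (yISI : Ω → Fin N → Fin M → ℂ)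
    (hyISI : ∀ (ω : Ω) (n : Fin N) (m : Fin M), yISI ω n m =
      ∑ q ∈ Finset.univ.filter (fun q : Fin Q => Qt ≤ (q : ℕ)), α q ω *
        Complex.exp (2 * (Real.pi : ℂ) * Complex.I * (((m : ℕ) : ℂ) - 1) * ((fd q : ℝ) : ℂ) * (Ts : ℂ)) *
        ∑ n' : Fin N, s (n', m.castSucc) ω *
          Complex.exp (2 * (Real.pi : ℂ) * Complex.I * ((n' : ℕ) : ℂ) * (Δf : ℂ) * ((Tcp : ℝ) - τ q : ℝ)) *
          Φ q n n')
    (χfree : ℤ → ℤ → Ω → ℂ)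
    (hχfree : ∀ (lv νv : ℤ) (ω : Ω), χfree lv νv ω =
      ((1 / Real.sqrt ((M : ℝ) * (N : ℝ)) : ℝ) : ℂ) *
      ∑ n : Fin N, ∑ m : Fin M, yfree ω n m * (starRingEnd ℂ) (s (n, m.succ) ω) *
        Complex.exp (2 * (Real.pi : ℂ) * Complex.I * ((n : ℕ) : ℂ) * (lv : ℂ) / (N : ℂ)) *
        Complex.exp (-(2 * (Real.pi : ℂ) * Complex.I * ((m : ℕ) : ℂ) * (νv : ℂ) / (M : ℂ))))
    (χISI : ℤ → ℤ → Ω → ℂ)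
    (hχISI : ∀ (lv νv : ℤ) (ω : Ω), χISI lv νv ω =
      ((1 / Real.sqrt ((M : ℝ) * (N : ℝ)) : ℝ) : ℂ) *
      ∑ n : Fin N, ∑ m : Fin M, yISI ω n m * (starRingEnd ℂ) (s (n, m.succ) ω) *
        Complex.exp (2 * (Real.pi : ℂ) * Complex.I * ((n : ℕ) : ℂ) * (lv : ℂ) / (N : ℂ)) *
        Complex.exp (-(2 * (Real.pi : ℂ) * Complex.I * ((m : ℕ) : ℂ) * (νv : ℂ) / (M : ℂ))))
    : ∀ lv νv : ℤ,
      ∫ ω, χfree lv νv ω * (starRingEnd ℂ) (χISI lv νv ω) = 0 := by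
  intro lv νv
  have hfree ω := (hχfree lv νv ω).trans (rdm_free_eq_sum (α · ω) (s · ω) (hyfree ω))
  have hisi ω := (congrArg conj (hχISI lv νv ω)).trans
    (conj_rdm_isi_eq_sum (α · ω) (s · ω) (hyISI ω))
  simp_rw [hfree, hisi]
  exact integral_sum_mul_sum_eq_zero _ _ _ _ _ _ fun p _ k _ ↦
    integrable_and_integral_monomial_eq_zero hindep hαL2 hsL4 hsmean _ _ _ fun h ↦
      (Fin.castSucc_lt_succ (i := k.2.1)).ne (congrArg Prod.snd h)

/-- interference-free and ISI RDM components are uncorrelated. -/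
theorem stmt11 {Ω : Type*} [MeasureSpace Ω] [IsProbabilityMeasure (volume : Measure Ω)]
    (N M : ℕ) (hN : 0 < N) (hM : 0 < M)
    (Δf Ts Tcp : ℝ) (hΔf : 0 < Δf) (hTs : 0 < Ts) (hTcp : 0 < Tcp) (Ncp : ℕ)
    (Q : ℕ) (hQ : 1 ≤ Q)
    (τ fd : Fin Q → ℝ) (P : Fin Q → ℝ) (l : Fin Q → ℤ)
    (Qt : ℕ) (hQt : Qt ≤ Q)
    (hl : ∀ q : Fin Q, Qt ≤ (q : ℕ) → (Ncp : ℤ) < l q ∧ l q ≤ (N : ℤ) + (Ncp : ℤ))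
    (ρ : Fin Q → ℝ) (hρ : ∀ q : Fin Q, ρ q = ((l q : ℝ) - (Ncp : ℝ)) / (N : ℝ))
    (Φ : Fin Q → Matrix (Fin N) (Fin N) ℂ)
    (hΦ : ∀ q : Fin Q, Qt ≤ (q : ℕ) → ∀ n n' : Fin N,
      Φ q n n' = (1 / (N : ℂ)) * ∑ i ∈ Finset.range (l q - (Ncp : ℤ)).toNat,
        Complex.exp (2 * (Real.pi : ℂ) * Complex.I *
          (((n' : ℕ) : ℂ) - ((n : ℕ) : ℂ)) * (i : ℂ) / (N : ℂ)))
    (s : Fin N × Fin (M + 1) → Ω → ℂ) (α : Fin Q → Ω → ℂ) (μ₄ : ℝ)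
    (hindep : iIndepFun (Sum.elim α s) volume)
    (hident : ∀ A B : Fin N × Fin (M + 1), IdentDistrib (s A) (s B) volume volume)
    (hsL4 : ∀ A : Fin N × Fin (M + 1), MemLp (s A) 4 volume)
    (hsmean : ∀ A : Fin N × Fin (M + 1), ∫ ω, s A ω = 0)
    (hssq : ∀ A : Fin N × Fin (M + 1), ∫ ω, (s A ω) ^ 2 = 0)
    (hsabs2 : ∀ A : Fin N × Fin (M + 1), ∫ ω, ‖s A ω‖ ^ 2 = 1)
    (hsabs4 : ∀ A : Fin N × Fin (M + 1), ∫ ω, ‖s A ω‖ ^ 4 = μ₄)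
    (hαL2 : ∀ q : Fin Q, MemLp (α q) 2 volume)
    (hαmean : ∀ q : Fin Q, ∫ ω, α q ω = 0)
    (hαabs2 : ∀ q : Fin Q, ∫ ω, ‖α q ω‖ ^ 2 = P q)
    (yfree : Ω → Fin N → Fin M → ℂ)
    (hyfree : ∀ (ω : Ω) (n : Fin N) (m : Fin M), yfree ω n m =
      ∑ q : Fin Q, α q ω * s (n, m.succ) ω *
        Complex.exp (-(2 * (Real.pi : ℂ) * Complex.I * ((n : ℕ) : ℂ) * (Δf : ℂ) * ((τ q : ℝ) : ℂ))) *
        Complex.exp (2 * (Real.pi : ℂ) * Complex.I * ((m : ℕ) : ℂ) * ((fd q : ℝ) : ℂ) * (Ts : ℂ)))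
    (yISI : Ω → Fin N → Fin M → ℂ)
    (hyISI : ∀ (ω : Ω) (n : Fin N) (m : Fin M), yISI ω n m =
      ∑ q ∈ Finset.univ.filter (fun q : Fin Q => Qt ≤ (q : ℕ)), α q ω *
        Complex.exp (2 * (Real.pi : ℂ) * Complex.I * (((m : ℕ) : ℂ) - 1) * ((fd q : ℝ) : ℂ) * (Ts : ℂ)) *
        ∑ n' : Fin N, s (n', m.castSucc) ω *
          Complex.exp (2 * (Real.pi : ℂ) * Complex.I * ((n' : ℕ) : ℂ) * (Δf : ℂ) * ((Tcp : ℝ) - τ q : ℝ)) *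
          Φ q n n')
    (χfree : ℤ → ℤ → Ω → ℂ)
    (hχfree : ∀ (lv νv : ℤ) (ω : Ω), χfree lv νv ω =
      ((1 / Real.sqrt ((M : ℝ) * (N : ℝ)) : ℝ) : ℂ) *
      ∑ n : Fin N, ∑ m : Fin M, yfree ω n m * (starRingEnd ℂ) (s (n, m.succ) ω) *
        Complex.exp (2 * (Real.pi : ℂ) * Complex.I * ((n : ℕ) : ℂ) * (lv : ℂ) / (N : ℂ)) *
        Complex.exp (-(2 * (Real.pi : ℂ) * Complex.I * ((m : ℕ) : ℂ) * (νv : ℂ) / (M : ℂ))))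
    (χISI : ℤ → ℤ → Ω → ℂ)
    (hχISI : ∀ (lv νv : ℤ) (ω : Ω), χISI lv νv ω =
      ((1 / Real.sqrt ((M : ℝ) * (N : ℝ)) : ℝ) : ℂ) *
      ∑ n : Fin N, ∑ m : Fin M, yISI ω n m * (starRingEnd ℂ) (s (n, m.succ) ω) *
        Complex.exp (2 * (Real.pi : ℂ) * Complex.I * ((n : ℕ) : ℂ) * (lv : ℂ) / (N : ℂ)) *
        Complex.exp (-(2 * (Real.pi : ℂ) * Complex.I * ((m : ℕ) : ℂ) * (νv : ℂ) / (M : ℂ))))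
    : ∀ lv νv : ℤ,
      ∫ ω, χfree lv νv ω * (starRingEnd ℂ) (χISI lv νv ω) = 0 :=
  stmt11_general N M Δf Ts Tcp Q τ fd Qt Φ s α hindep hsL4 hsmean hαL2 yfree hyfree yISI hyISI χfree
    hχfree χISI hχISI
end

section
/- For all integers l and ν, the ISI and ICI components of the range-Doppler map are uncorrelated: E[χ_ISI(l,ν)·conj(χ_ICI(l,ν))] = 0. -/
/-!
Expanding both range-Doppler maps, `E[χ_ISI · conj χ_ICI]` becomes a finite linear combination of
the moments `E[α_q conj α_p · s_{k,m-1} conj s_{n,m} · conj s_{j,m'} s_{n',m'}]`. In each of them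
some data symbol occurs exactly once: `s_{k,m-1}` unless `m - 1 = m'`, and then `s_{n,m}`. That
symbol is independent of the other factors and centred, so the moment vanishes. Independence of
the gains from the symbols, with `α ∈ L²` and `s ∈ L⁴`, makes every moment finite.
-/

open MeasureTheory ProbabilityTheory Complex Finset Matrix
open scoped ComplexConjugate

instance : ENNReal.HolderTriple 4 4 2 where
  inv_add_inv_eq_inv := by
    rw [← two_mul, show (4 : ENNReal) = 2 * 2 by norm_num, ENNReal.mul_inv (by simp) (by simp),
      ← mul_assoc, ENNReal.mul_inv_cancel (by simp) (by simp), one_mul]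

def zeroMeanIntegrable {Ω : Type*} {mΩ : MeasurableSpace Ω} (μ : Measure Ω) :
    Submodule ℂ (Ω → ℂ) where
  carrier := {f | Integrable f μ ∧ ∫ ω, f ω ∂μ = 0}
  add_mem' := fun ⟨hf, hf0⟩ ⟨hg, hg0⟩ => ⟨hf.add hg, by simp [integral_add hf hg, hf0, hg0]⟩
  zero_mem' := ⟨integrable_zero _ _ _, by simp⟩
  smul_mem' := fun c _ ⟨hf, hf0⟩ => ⟨hf.smul c, by simp [integral_const_mul, hf0]⟩

namespace ProbabilityTheory.iIndepFun

variable {Ω ι : Type*} {mΩ : MeasurableSpace Ω} {μ : Measure Ω} {F : ι → Ω → ℂ}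

lemma integral_comp_mul_eq_zero (hF : iIndepFun F μ) (hFm : ∀ i, AEMeasurable (F i) μ)
    {i : ι} {S : Finset ι} (hiS : i ∉ S) {φ : ℂ → ℂ} (hφ : Measurable φ)
    (hφ0 : ∫ ω, φ (F i ω) ∂μ = 0) {g : (S → ℂ) → ℂ} (hg : Measurable g) :
    ∫ ω, φ (F i ω) * g (fun j => F j ω) ∂μ = 0 := by
  classical
  have hf : Measurable fun v : ({i} : Finset ι) → ℂ => φ (v ⟨i, mem_singleton_self i⟩) :=
    hφ.comp (measurable_pi_apply _)
  have key := (hF.indepFun_finset₀ {i} S (disjoint_singleton_left.2 hiS) hFm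
    ).integral_fun_comp_mul_comp (aemeasurable_pi_lambda _ fun j => hFm j)
    (aemeasurable_pi_lambda _ fun j => hFm j) hf.aestronglyMeasurable hg.aestronglyMeasurable
  simpa [hφ0] using key

lemma integrable_mul_of_disjoint (hF : iIndepFun F μ) (hFm : ∀ i, AEMeasurable (F i) μ)
    {S T : Finset ι} (hST : Disjoint S T) {g : (S → ℂ) → ℂ} {h : (T → ℂ) → ℂ}
    (hg : Measurable g) (hh : Measurable h) (hgi : Integrable (fun ω => g fun j => F j ω) μ)
    (hhi : Integrable (fun ω => h fun j => F j ω) μ) :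
    Integrable (fun ω => g (fun j => F j ω) * h (fun j => F j ω)) μ :=
  ((hF.indepFun_finset₀ S T hST hFm).comp hg hh).integrable_mul hgi hhi

end ProbabilityTheory.iIndepFun

section CrossTerm

variable {Ω ι κ : Type*} {mΩ : MeasurableSpace Ω} {μ : Measure Ω}
  {α : ι → Ω → ℂ} {s : κ → Ω → ℂ}

def crossTerm (α : ι → Ω → ℂ) (s : κ → Ω → ℂ) (q p : ι) (a b c d : κ) (ω : Ω) : ℂ :=
  α q ω * conj (α p ω) * (s a ω * conj (s b ω) * conj (s c ω) * s d ω)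

lemma integrable_crossTerm (hindep : iIndepFun (Sum.elim α s) μ)
    (hα : ∀ q, MemLp (α q) 2 μ) (hs : ∀ k, MemLp (s k) 4 μ) (q p : ι) (a b c d : κ) :
    Integrable (crossTerm α s q p a b c d) μ := by
  classical
  let S : Finset (ι ⊕ κ) := {.inl q, .inl p}
  let T : Finset (ι ⊕ κ) := {.inr a, .inr b, .inr c, .inr d}
  have hgi : Integrable (fun ω => α q ω * conj (α p ω)) μ := (hα q).integrable_mul (hα p).star
  have hhi : Integrable (fun ω => s a ω * conj (s b ω) * conj (s c ω) * s d ω) μ := by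
    have hab : MemLp (fun ω => s a ω * conj (s b ω)) 2 μ := (hs b).star.mul (hs a)
    have hcd : MemLp (fun ω => conj (s c ω) * s d ω) 2 μ := (hs d).mul (hs c).star
    simpa only [Pi.mul_def, mul_assoc] using hab.integrable_mul hcd
  exact hindep.integrable_mul_of_disjoint
    (Sum.forall.2 ⟨fun q => (hα q).aemeasurable, fun k => (hs k).aemeasurable⟩)
    (S := S) (T := T) (by simp [S, T])
    (g := fun v => v ⟨.inl q, by simp [S]⟩ * conj (v ⟨.inl p, by simp [S]⟩))
    (h := fun v => v ⟨.inr a, by simp [T]⟩ * conj (v ⟨.inr b, by simp [T]⟩) *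
      conj (v ⟨.inr c, by simp [T]⟩) * v ⟨.inr d, by simp [T]⟩)
    (by fun_prop) (by fun_prop) hgi hhi

lemma integral_crossTerm_eq_zero (hindep : iIndepFun (Sum.elim α s) μ)
    (hαm : ∀ q, AEMeasurable (α q) μ) (hsm : ∀ k, AEMeasurable (s k) μ)
    (hs0 : ∀ k, ∫ ω, s k ω ∂μ = 0) (q p : ι) {a b c d : κ}
    (h : (a ≠ b ∧ a ≠ c ∧ a ≠ d) ∨ (b ≠ a ∧ b ≠ c ∧ b ≠ d)) :
    ∫ ω, crossTerm α s q p a b c d ω ∂μ = 0 := by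
  classical
  have hFm : ∀ i, AEMeasurable (Sum.elim α s i) μ := Sum.forall.2 ⟨hαm, hsm⟩
  rcases h with ⟨hab, hac, had⟩ | ⟨hba, hbc, hbd⟩
  · let S : Finset (ι ⊕ κ) := {.inl q, .inl p, .inr b, .inr c, .inr d}
    refine (integral_congr_ae (.of_forall fun ω => ?_)).trans
      (hindep.integral_comp_mul_eq_zero hFm (i := .inr a) (S := S) (by simp [S, hab, hac, had])
        measurable_id (hs0 a) (g := fun v => v ⟨.inl q, by simp [S]⟩ *
          conj (v ⟨.inl p, by simp [S]⟩) * conj (v ⟨.inr b, by simp [S]⟩) *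
          conj (v ⟨.inr c, by simp [S]⟩) * v ⟨.inr d, by simp [S]⟩) (by fun_prop))
    simp only [crossTerm, id, Sum.elim_inl, Sum.elim_inr]
    ring
  · let S : Finset (ι ⊕ κ) := {.inl q, .inl p, .inr a, .inr c, .inr d}
    refine (integral_congr_ae (.of_forall fun ω => ?_)).trans
      (hindep.integral_comp_mul_eq_zero hFm (i := .inr b) (S := S) (by simp [S, hba, hbc, hbd])
        (φ := conj) (by fun_prop) (by simp [integral_conj, hs0 b])
        (g := fun v => v ⟨.inl q, by simp [S]⟩ *
          conj (v ⟨.inl p, by simp [S]⟩) * v ⟨.inr a, by simp [S]⟩ *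
          conj (v ⟨.inr c, by simp [S]⟩) * v ⟨.inr d, by simp [S]⟩) (by fun_prop))
    simp only [crossTerm, Sum.elim_inl, Sum.elim_inr]
    ring

end CrossTerm

section RangeDoppler

variable {Ω ι K : Type*} {mΩ : MeasurableSpace Ω} {μ : Measure Ω} {M : ℕ}
  {α : ι → Ω → ℂ} {s : K × Fin (M + 1) → Ω → ℂ}

lemma crossTerm_mem_zeroMeanIntegrable (hindep : iIndepFun (Sum.elim α s) μ)
    (hα : ∀ q, MemLp (α q) 2 μ) (hs : ∀ k, MemLp (s k) 4 μ) (hs0 : ∀ k, ∫ ω, s k ω ∂μ = 0)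
    (q p : ι) (k n j n' : K) (m m' : Fin M) :
    crossTerm α s q p (k, m.castSucc) (n, m.succ) (j, m'.succ) (n', m'.succ) ∈
      zeroMeanIntegrable μ := by
  refine ⟨integrable_crossTerm hindep hα hs .., integral_crossTerm_eq_zero hindep
    (fun q => (hα q).aemeasurable) (fun k => (hs k).aemeasurable) hs0 q p ?_⟩
  by_cases h : (m : ℕ) = m' + 1
  · right; simp [Prod.ext_iff, Fin.ext_iff]; omega
  · left; simp [Prod.ext_iff, Fin.ext_iff]; omega

-- The symbol of block `m` is `s (·, m.succ)`, so `s (·, m.castSucc)` is the one of block `m - 1`.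
lemma integral_mul_conj_eq_zero [Fintype K] (hindep : iIndepFun (Sum.elim α s) μ)
    (hα : ∀ q, MemLp (α q) 2 μ) (hs : ∀ k, MemLp (s k) 4 μ) (hs0 : ∀ k, ∫ ω, s k ω ∂μ = 0)
    (T : Finset ι) (c d : K → Fin M → ι → K → ℂ) {X Y : Ω → ℂ}
    (hX : ∀ ω, X ω = ∑ n, ∑ m, ∑ q ∈ T, ∑ k,
      c n m q k * (α q ω * s (k, m.castSucc) ω * conj (s (n, m.succ) ω)))
    (hY : ∀ ω, Y ω = ∑ n, ∑ m, ∑ q ∈ T, ∑ k,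
      d n m q k * (α q ω * s (k, m.succ) ω * conj (s (n, m.succ) ω))) :
    ∫ ω, X ω * conj (Y ω) ∂μ = 0 := by
  have hXY : (fun ω => X ω * conj (Y ω)) = ∑ n, ∑ m, ∑ q ∈ T, ∑ k, ∑ n', ∑ m', ∑ p ∈ T, ∑ j,
      (c n m q k * conj (d n' m' p j)) •
        crossTerm α s q p (k, m.castSucc) (n, m.succ) (j, m'.succ) (n', m'.succ) := by
    funext ω
    simp only [hX, hY, map_sum, map_mul, conj_conj, Finset.sum_apply, Pi.smul_apply, smul_eq_mul,
      crossTerm]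
    simp only [sum_mul]
    simp only [mul_sum]
    congr! 8
    ring
  have hmem : (fun ω => X ω * conj (Y ω)) ∈ zeroMeanIntegrable μ := hXY ▸
    sum_mem fun n _ => sum_mem fun m _ => sum_mem fun q _ => sum_mem fun k _ =>
    sum_mem fun n' _ => sum_mem fun m' _ => sum_mem fun p _ => sum_mem fun j _ =>
    Submodule.smul_mem _ _ (crossTerm_mem_zeroMeanIntegrable hindep hα hs hs0 q p k n j n' m m')
  exact hmem.2

end RangeDoppler

theorem stmt13_general {Ω : Type*} [MeasureSpace Ω]
    (N M : ℕ)
    (Δf Ts Tcp : ℝ)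
    (Q : ℕ)
    (τ fd : Fin Q → ℝ)
    (Qt : ℕ)
    (Φ : Fin Q → Matrix (Fin N) (Fin N) ℂ)
    (s : Fin N × Fin (M + 1) → Ω → ℂ) (α : Fin Q → Ω → ℂ)
    (hindep : iIndepFun (Sum.elim α s) volume)
    (hsL4 : ∀ A : Fin N × Fin (M + 1), MemLp (s A) 4 volume)
    (hsmean : ∀ A : Fin N × Fin (M + 1), ∫ ω, s A ω = 0)
    (hαL2 : ∀ q : Fin Q, MemLp (α q) 2 volume)
    (yISI : Ω → Fin N → Fin M → ℂ)
    (hyISI : ∀ (ω : Ω) (n : Fin N) (m : Fin M), yISI ω n m =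
      ∑ q ∈ Finset.univ.filter (fun q : Fin Q => Qt ≤ (q : ℕ)), α q ω *
        Complex.exp (2 * (Real.pi : ℂ) * Complex.I * (((m : ℕ) : ℂ) - 1) * ((fd q : ℝ) : ℂ) * (Ts : ℂ)) *
        ∑ n' : Fin N, s (n', m.castSucc) ω *
          Complex.exp (2 * (Real.pi : ℂ) * Complex.I * ((n' : ℕ) : ℂ) * (Δf : ℂ) * ((Tcp : ℝ) - τ q : ℝ)) *
          Φ q n n')
    (yICI : Ω → Fin N → Fin M → ℂ)
    (hyICI : ∀ (ω : Ω) (n : Fin N) (m : Fin M), yICI ω n m =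
      ∑ q ∈ Finset.univ.filter (fun q : Fin Q => Qt ≤ (q : ℕ)), α q ω *
        Complex.exp (2 * (Real.pi : ℂ) * Complex.I * ((m : ℕ) : ℂ) * ((fd q : ℝ) : ℂ) * (Ts : ℂ)) *
        ∑ n' : Fin N, s (n', m.succ) ω *
          Complex.exp (-(2 * (Real.pi : ℂ) * Complex.I * ((n' : ℕ) : ℂ) * (Δf : ℂ) * ((τ q : ℝ) : ℂ))) *
          Φ q n n')
    (χISI : ℤ → ℤ → Ω → ℂ)
    (hχISI : ∀ (lv νv : ℤ) (ω : Ω), χISI lv νv ω =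
      ((1 / Real.sqrt ((M : ℝ) * (N : ℝ)) : ℝ) : ℂ) *
      ∑ n : Fin N, ∑ m : Fin M, yISI ω n m * (starRingEnd ℂ) (s (n, m.succ) ω) *
        Complex.exp (2 * (Real.pi : ℂ) * Complex.I * ((n : ℕ) : ℂ) * (lv : ℂ) / (N : ℂ)) *
        Complex.exp (-(2 * (Real.pi : ℂ) * Complex.I * ((m : ℕ) : ℂ) * (νv : ℂ) / (M : ℂ))))
    (χICI : ℤ → ℤ → Ω → ℂ)
    (hχICI : ∀ (lv νv : ℤ) (ω : Ω), χICI lv νv ω =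
      ((1 / Real.sqrt ((M : ℝ) * (N : ℝ)) : ℝ) : ℂ) *
      ∑ n : Fin N, ∑ m : Fin M, yICI ω n m * (starRingEnd ℂ) (s (n, m.succ) ω) *
        Complex.exp (2 * (Real.pi : ℂ) * Complex.I * ((n : ℕ) : ℂ) * (lv : ℂ) / (N : ℂ)) *
        Complex.exp (-(2 * (Real.pi : ℂ) * Complex.I * ((m : ℕ) : ℂ) * (νv : ℂ) / (M : ℂ))))
    : ∀ lv νv : ℤ,
      ∫ ω, χISI lv νv ω * (starRingEnd ℂ) (χICI lv νv ω) = 0 := by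
  intro lv νv
  set C : ℂ := ((1 / Real.sqrt ((M : ℝ) * (N : ℝ)) : ℝ) : ℂ)
  refine integral_mul_conj_eq_zero hindep hαL2 hsL4 hsmean
    (univ.filter fun q : Fin Q => Qt ≤ (q : ℕ))
    (fun n m q k => C *
      Complex.exp (2 * (Real.pi : ℂ) * Complex.I * (((m : ℕ) : ℂ) - 1) * ((fd q : ℝ) : ℂ) *
        (Ts : ℂ)) *
      Complex.exp (2 * (Real.pi : ℂ) * Complex.I * ((k : ℕ) : ℂ) * (Δf : ℂ) *
        ((Tcp : ℝ) - τ q : ℝ)) *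
      Φ q n k *
      Complex.exp (2 * (Real.pi : ℂ) * Complex.I * ((n : ℕ) : ℂ) * (lv : ℂ) / (N : ℂ)) *
      Complex.exp (-(2 * (Real.pi : ℂ) * Complex.I * ((m : ℕ) : ℂ) * (νv : ℂ) / (M : ℂ))))
    (fun n m q k => C *
      Complex.exp (2 * (Real.pi : ℂ) * Complex.I * ((m : ℕ) : ℂ) * ((fd q : ℝ) : ℂ) * (Ts : ℂ)) *
      Complex.exp (-(2 * (Real.pi : ℂ) * Complex.I * ((k : ℕ) : ℂ) * (Δf : ℂ) * ((τ q : ℝ) : ℂ))) *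
      Φ q n k *
      Complex.exp (2 * (Real.pi : ℂ) * Complex.I * ((n : ℕ) : ℂ) * (lv : ℂ) / (N : ℂ)) *
      Complex.exp (-(2 * (Real.pi : ℂ) * Complex.I * ((m : ℕ) : ℂ) * (νv : ℂ) / (M : ℂ))))
    (fun ω => ?_) (fun ω => ?_)
  · simp only [hχISI, hyISI, mul_sum, sum_mul]
    congr! 4
    ring
  · simp only [hχICI, hyICI, mul_sum, sum_mul]
    congr! 4
    ring

/-- ISI and ICI RDM components are uncorrelated. -/
theorem stmt13 {Ω : Type*} [MeasureSpace Ω] [IsProbabilityMeasure (volume : Measure Ω)]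
    (N M : ℕ) (hN : 0 < N) (hM : 0 < M)
    (Δf Ts Tcp : ℝ) (hΔf : 0 < Δf) (hTs : 0 < Ts) (hTcp : 0 < Tcp) (Ncp : ℕ)
    (Q : ℕ) (hQ : 1 ≤ Q)
    (τ fd : Fin Q → ℝ) (P : Fin Q → ℝ) (l : Fin Q → ℤ)
    (Qt : ℕ) (hQt : Qt ≤ Q)
    (hl : ∀ q : Fin Q, Qt ≤ (q : ℕ) → (Ncp : ℤ) < l q ∧ l q ≤ (N : ℤ) + (Ncp : ℤ))
    (ρ : Fin Q → ℝ) (hρ : ∀ q : Fin Q, ρ q = ((l q : ℝ) - (Ncp : ℝ)) / (N : ℝ))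
    (Φ : Fin Q → Matrix (Fin N) (Fin N) ℂ)
    (hΦ : ∀ q : Fin Q, Qt ≤ (q : ℕ) → ∀ n n' : Fin N,
      Φ q n n' = (1 / (N : ℂ)) * ∑ i ∈ Finset.range (l q - (Ncp : ℤ)).toNat,
        Complex.exp (2 * (Real.pi : ℂ) * Complex.I *
          (((n' : ℕ) : ℂ) - ((n : ℕ) : ℂ)) * (i : ℂ) / (N : ℂ)))
    (s : Fin N × Fin (M + 1) → Ω → ℂ) (α : Fin Q → Ω → ℂ) (μ₄ : ℝ)
    (hindep : iIndepFun (Sum.elim α s) volume)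
    (hident : ∀ A B : Fin N × Fin (M + 1), IdentDistrib (s A) (s B) volume volume)
    (hsL4 : ∀ A : Fin N × Fin (M + 1), MemLp (s A) 4 volume)
    (hsmean : ∀ A : Fin N × Fin (M + 1), ∫ ω, s A ω = 0)
    (hssq : ∀ A : Fin N × Fin (M + 1), ∫ ω, (s A ω) ^ 2 = 0)
    (hsabs2 : ∀ A : Fin N × Fin (M + 1), ∫ ω, ‖s A ω‖ ^ 2 = 1)
    (hsabs4 : ∀ A : Fin N × Fin (M + 1), ∫ ω, ‖s A ω‖ ^ 4 = μ₄)
    (hαL2 : ∀ q : Fin Q, MemLp (α q) 2 volume)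
    (hαmean : ∀ q : Fin Q, ∫ ω, α q ω = 0)
    (hαabs2 : ∀ q : Fin Q, ∫ ω, ‖α q ω‖ ^ 2 = P q)
    (yISI : Ω → Fin N → Fin M → ℂ)
    (hyISI : ∀ (ω : Ω) (n : Fin N) (m : Fin M), yISI ω n m =
      ∑ q ∈ Finset.univ.filter (fun q : Fin Q => Qt ≤ (q : ℕ)), α q ω *
        Complex.exp (2 * (Real.pi : ℂ) * Complex.I * (((m : ℕ) : ℂ) - 1) * ((fd q : ℝ) : ℂ) * (Ts : ℂ)) *
        ∑ n' : Fin N, s (n', m.castSucc) ω *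
          Complex.exp (2 * (Real.pi : ℂ) * Complex.I * ((n' : ℕ) : ℂ) * (Δf : ℂ) * ((Tcp : ℝ) - τ q : ℝ)) *
          Φ q n n')
    (yICI : Ω → Fin N → Fin M → ℂ)
    (hyICI : ∀ (ω : Ω) (n : Fin N) (m : Fin M), yICI ω n m =
      ∑ q ∈ Finset.univ.filter (fun q : Fin Q => Qt ≤ (q : ℕ)), α q ω *
        Complex.exp (2 * (Real.pi : ℂ) * Complex.I * ((m : ℕ) : ℂ) * ((fd q : ℝ) : ℂ) * (Ts : ℂ)) *
        ∑ n' : Fin N, s (n', m.succ) ω *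
          Complex.exp (-(2 * (Real.pi : ℂ) * Complex.I * ((n' : ℕ) : ℂ) * (Δf : ℂ) * ((τ q : ℝ) : ℂ))) *
          Φ q n n')
    (χISI : ℤ → ℤ → Ω → ℂ)
    (hχISI : ∀ (lv νv : ℤ) (ω : Ω), χISI lv νv ω =
      ((1 / Real.sqrt ((M : ℝ) * (N : ℝ)) : ℝ) : ℂ) *
      ∑ n : Fin N, ∑ m : Fin M, yISI ω n m * (starRingEnd ℂ) (s (n, m.succ) ω) *
        Complex.exp (2 * (Real.pi : ℂ) * Complex.I * ((n : ℕ) : ℂ) * (lv : ℂ) / (N : ℂ)) *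
        Complex.exp (-(2 * (Real.pi : ℂ) * Complex.I * ((m : ℕ) : ℂ) * (νv : ℂ) / (M : ℂ))))
    (χICI : ℤ → ℤ → Ω → ℂ)
    (hχICI : ∀ (lv νv : ℤ) (ω : Ω), χICI lv νv ω =
      ((1 / Real.sqrt ((M : ℝ) * (N : ℝ)) : ℝ) : ℂ) *
      ∑ n : Fin N, ∑ m : Fin M, yICI ω n m * (starRingEnd ℂ) (s (n, m.succ) ω) *
        Complex.exp (2 * (Real.pi : ℂ) * Complex.I * ((n : ℕ) : ℂ) * (lv : ℂ) / (N : ℂ)) *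
        Complex.exp (-(2 * (Real.pi : ℂ) * Complex.I * ((m : ℕ) : ℂ) * (νv : ℂ) / (M : ℂ))))
    : ∀ lv νv : ℤ,
      ∫ ω, χISI lv νv ω * (starRingEnd ℂ) (χICI lv νv ω) = 0 :=
  stmt13_general N M Δf Ts Tcp Q τ fd Qt Φ s α hindep hsL4 hsmean hαL2 yISI hyISI yICI hyICI χISI
    hχISI χICI hχICI
end
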